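/- arXiv:2403.07152 — 7 statements merged into one kernel-verified Lean document; each statement's English description precedes it below -/
import Mathlib

section
/- Let {F_e}_{e>0} be a family of CDFs on ℝ such that each F_e is continuous and strictly increasing, for each fixed x the map e ↦ F_e(x) is continuous, strictly decreasing, and tends to 0 as e → ∞. Let k ∈ (0,1) and let p be a Borel measure on (0,∞) with p((0,∞)) ∈ (k,1]. Then there exists a unique s ∈ ℝ such that ∫ (1 - F_e(s)) dp(e) = k. -/
open MeasureTheory Set Filter Topology

noncomputable section

/-- A family of performance CDFs `{F_e}` as in Definition 2 (RPF):
each `F e` is a continuous strictly increasing CDF, and for each `x`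
the map `e ↦ F e x` is continuous, strictly decreasing on `(0,∞)`,
and tends to `0` as `e → ∞`. -/
def IsCDFfam (F : ℝ → ℝ → ℝ) : Prop :=
  (∀ e ∈ Set.Ioi (0:ℝ), Continuous (F e) ∧ StrictMono (F e) ∧
    Filter.Tendsto (F e) Filter.atBot (nhds 0) ∧
    Filter.Tendsto (F e) Filter.atTop (nhds 1)) ∧
  (∀ x : ℝ, ContinuousOn (fun e => F e x) (Set.Ioi 0) ∧
    StrictAntiOn (fun e => F e x) (Set.Ioi 0) ∧
    Filter.Tendsto (fun e => F e x) Filter.atTop (nhds 0))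

/-- `p ∈ Δ_k`: a Borel measure on `E = (0,∞)` (modeled as a measure on `ℝ`
giving no mass to `(-∞,0]`) with total mass in `(k, 1]`. -/
def MemDelta (k : ℝ) (p : MeasureTheory.Measure ℝ) : Prop :=
  p (Set.Iic 0) = 0 ∧ ENNReal.ofReal k < p Set.univ ∧ p Set.univ ≤ 1

/-- A contest success function with budget `k`. -/
def IsCSF (k : ℝ) (W : ℝ → MeasureTheory.Measure ℝ → ℝ) : Prop :=
  ∀ p : MeasureTheory.Measure ℝ, MemDelta k p →
    (∀ e ∈ Set.Ioi (0:ℝ), W e p ∈ Set.Icc (0:ℝ) 1) ∧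
    Measurable (fun e => W e p) ∧ (∫ e, W e p ∂p) = k

/-- Random Performance Function: `W e p = 1 - F e (s p)` where the cutoff
`s p` solves the market-clearing equation. -/
def IsRPF (k : ℝ) (W : ℝ → MeasureTheory.Measure ℝ → ℝ) : Prop :=
  ∃ F : ℝ → ℝ → ℝ, IsCDFfam F ∧
    ∀ p : MeasureTheory.Measure ℝ, MemDelta k p → ∃ s : ℝ,
      (∫ e, (1 - F e s) ∂p) = k ∧ ∀ e ∈ Set.Ioi (0:ℝ), W e p = 1 - F e s

/-- Co-monotonicity. -/
def CoMonotone (k : ℝ) (W : ℝ → MeasureTheory.Measure ℝ → ℝ) : Prop :=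
  ∀ e ∈ Set.Ioi (0:ℝ), ∀ e' ∈ Set.Ioi (0:ℝ), ∀ p p' : MeasureTheory.Measure ℝ,
    MemDelta k p → MemDelta k p' → W e p' ≤ W e p → W e' p' ≤ W e' p

/-- Monotonicity. -/
def CSFMonotone (k : ℝ) (W : ℝ → MeasureTheory.Measure ℝ → ℝ) : Prop :=
  ∀ p : MeasureTheory.Measure ℝ, MemDelta k p →
    StrictMonoOn (fun e => W e p) (Set.Ioi 0) ∧
    Filter.Tendsto (fun e => W e p) Filter.atTop (nhds 1)

/-- Competitiveness. -/
def CSFCompetitive (k : ℝ) (W : ℝ → MeasureTheory.Measure ℝ → ℝ) : Prop :=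
  ∀ e ∈ Set.Ioi (0:ℝ),
    Filter.Tendsto (fun eb => W e (MeasureTheory.Measure.dirac eb)) Filter.atTop (nhds 0)

/-- The mixture `α p + (1-α) p'`. -/
def mix (α : ℝ) (p p' : MeasureTheory.Measure ℝ) : MeasureTheory.Measure ℝ :=
  ENNReal.ofReal α • p + ENNReal.ofReal (1 - α) • p'

/-- p-Continuity. -/
def PContinuousCSF (k : ℝ) (W : ℝ → MeasureTheory.Measure ℝ → ℝ) : Prop :=
  ∀ e ∈ Set.Ioi (0:ℝ), ∀ p p' : MeasureTheory.Measure ℝ,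
    MemDelta k p → MemDelta k p' →
    ContinuousOn (fun α => W e (mix α p p')) (Set.Icc 0 1)

/-- e-Continuity. -/
def EContinuous (k : ℝ) (W : ℝ → MeasureTheory.Measure ℝ → ℝ) : Prop :=
  ∀ p : MeasureTheory.Measure ℝ, MemDelta k p →
    ContinuousOn (fun e => W e p) (Set.Ioi 0)

/-- The right-shift `p ∔ a`. -/
def shift (p : MeasureTheory.Measure ℝ) (a : ℝ) : MeasureTheory.Measure ℝ :=
  MeasureTheory.Measure.map (fun x => x + a) p

/-- A single continuous strictly increasing CDF on `ℝ`. -/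
def IsCDF (F : ℝ → ℝ) : Prop :=
  Continuous F ∧ StrictMono F ∧
  Filter.Tendsto F Filter.atBot (nhds 0) ∧ Filter.Tendsto F Filter.atTop (nhds 1)

/-- `F` represents `W` as an additive RPF: `W e p = 1 - F (s p - e)`. -/
def RepresentsA (k : ℝ) (W : ℝ → MeasureTheory.Measure ℝ → ℝ) (F : ℝ → ℝ) : Prop :=
  ∀ p : MeasureTheory.Measure ℝ, MemDelta k p → ∃ s : ℝ,
    (∫ e, (1 - F (s - e)) ∂p) = k ∧ ∀ e ∈ Set.Ioi (0:ℝ), W e p = 1 - F (s - e)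

/-- Additive RPF. -/
def IsARPF (k : ℝ) (W : ℝ → MeasureTheory.Measure ℝ → ℝ) : Prop :=
  ∃ F : ℝ → ℝ, IsCDF F ∧ RepresentsA k W F

/-- Invariance to Common Shifts. -/
def InvCommonShifts (k : ℝ) (W : ℝ → MeasureTheory.Measure ℝ → ℝ) : Prop :=
  ∀ e ∈ Set.Ioi (0:ℝ), ∀ a ∈ Set.Ioi (0:ℝ), ∀ p : MeasureTheory.Measure ℝ,
    MemDelta k p → W e p = W (e + a) (shift p a)

/-- Invariance to p Shifts. -/
def InvPShifts (k : ℝ) (W : ℝ → MeasureTheory.Measure ℝ → ℝ) : Prop :=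
  ∀ e ∈ Set.Ioi (0:ℝ), ∀ e' ∈ Set.Ioi (0:ℝ), ∀ a ∈ Set.Ioi (0:ℝ),
    ∀ p p' : MeasureTheory.Measure ℝ, MemDelta k p → MemDelta k p' →
    W e p = W e' p' → W e (shift p a) = W e' (shift p' a)

/-! The map `s ↦ ∫ (1 - F e s) ∂p` has integrands bounded by `1`, and `p` is a nonzero finite
measure carried by `(0, ∞)`, where every `1 - F e` is continuous and strictly decreasing from `1`
to `0`. By dominated convergence the map is continuous and strictly decreasing, with limit
`p(E) > k` at `-∞` and `0 < k` at `+∞`; the intermediate value theorem gives the cutoff. -/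

section IntegralOfFamily

variable {α β : Type*} [MeasurableSpace α] {μ : Measure α} {G : α → β → ℝ}

theorem integral_lt_integral_of_ae_lt {f g : α → ℝ} (hμ : μ ≠ 0) (hf : Integrable f μ)
    (hg : Integrable g μ) (hlt : ∀ᵐ x ∂μ, f x < g x) : ∫ x, f x ∂μ < ∫ x, g x ∂μ := by
  have hpos : 0 < ∫ x, (g x - f x) ∂μ := by
    rw [integral_pos_iff_support_of_nonneg_ae (hlt.mono fun x hx => sub_nonneg.2 hx.le)
      (hg.sub hf)]
    refine pos_iff_ne_zero.2 fun hnull => hμ ?_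
    have hzero : ∀ᵐ x ∂μ, g x - f x = 0 := by
      simpa [ae_iff, Function.support] using hnull
    refine ae_eq_bot.1 (eventually_false_iff_eq_bot.1 ?_)
    filter_upwards [hlt, hzero] with x hx hx0
    linarith
  rwa [integral_sub hg hf, sub_pos] at hpos

variable [IsFiniteMeasure μ] {C : ℝ}

theorem integrable_of_ae_norm_le (hmeas : ∀ s, AEStronglyMeasurable (fun e => G e s) μ)
    (hbound : ∀ᵐ e ∂μ, ∀ s, ‖G e s‖ ≤ C) (s : β) : Integrable (fun e => G e s) μ :=
  (integrable_const C).mono' (hmeas s) (hbound.mono fun _ he => he s)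

theorem continuous_integral_of_ae_norm_le [TopologicalSpace β] [FirstCountableTopology β]
    (hmeas : ∀ s, AEStronglyMeasurable (fun e => G e s) μ)
    (hbound : ∀ᵐ e ∂μ, ∀ s, ‖G e s‖ ≤ C) (hcont : ∀ᵐ e ∂μ, Continuous (G e)) :
    Continuous fun s => ∫ e, G e s ∂μ :=
  continuous_of_dominated hmeas (fun s => hbound.mono fun _ he => he s) (integrable_const C)
    hcont

theorem tendsto_integral_of_ae_norm_le {l : Filter β} [l.IsCountablyGenerated] {c : ℝ}
    (hmeas : ∀ s, AEStronglyMeasurable (fun e => G e s) μ)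
    (hbound : ∀ᵐ e ∂μ, ∀ s, ‖G e s‖ ≤ C) (hlim : ∀ᵐ e ∂μ, Tendsto (G e) l (𝓝 c)) :
    Tendsto (fun s => ∫ e, G e s ∂μ) l (𝓝 (μ.real univ * c)) := by
  have := tendsto_integral_filter_of_dominated_convergence (fun _ => C)
    (Eventually.of_forall hmeas)
    (Eventually.of_forall fun s => hbound.mono fun _ he => he s) (integrable_const C) hlim
  simpa [integral_const, smul_eq_mul] using this

theorem strictAnti_integral_of_ae_norm_le [Preorder β] (hμ : μ ≠ 0)
    (hmeas : ∀ s, AEStronglyMeasurable (fun e => G e s) μ)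
    (hbound : ∀ᵐ e ∂μ, ∀ s, ‖G e s‖ ≤ C) (hanti : ∀ᵐ e ∂μ, StrictAnti (G e)) :
    StrictAnti fun s => ∫ e, G e s ∂μ := fun _ _ hst =>
  integral_lt_integral_of_ae_lt hμ (integrable_of_ae_norm_le hmeas hbound _)
    (integrable_of_ae_norm_le hmeas hbound _) (hanti.mono fun _ he => he hst)

end IntegralOfFamily

theorem existsUnique_eq_of_strictAnti_of_tendsto {X α : Type*} [TopologicalSpace X]
    [PreconnectedSpace X] [LinearOrder X] [Nonempty X] [LinearOrder α] [TopologicalSpace α]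
    [OrderClosedTopology α] {g : X → α} {a b k : α} (hcont : Continuous g) (hanti : StrictAnti g)
    (hbot : Tendsto g atBot (𝓝 a)) (htop : Tendsto g atTop (𝓝 b)) (hk : k ∈ Ioo b a) :
    ∃! s, g s = k := by
  obtain ⟨s, hs⟩ := mem_range_of_exists_le_of_exists_ge hcont
    ((htop.eventually (eventually_lt_nhds hk.1)).exists.imp fun _ => le_of_lt)
    ((hbot.eventually (eventually_gt_nhds hk.2)).exists.imp fun _ => le_of_lt)
  exact ⟨s, hs, fun t ht => hanti.injective (ht.trans hs.symm)⟩

namespace MemDelta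

variable {k : ℝ} {p : Measure ℝ}

theorem isFiniteMeasure (hp : MemDelta k p) : IsFiniteMeasure p :=
  ⟨hp.2.2.trans_lt ENNReal.one_lt_top⟩

theorem ae_pos (hp : MemDelta k p) : ∀ᵐ e ∂p, 0 < e :=
  ae_iff.2 <| by simp only [not_lt]; exact hp.1

theorem ne_zero (hp : MemDelta k p) : p ≠ 0 := by
  rintro rfl
  simp [MemDelta] at hp

theorem lt_measureReal_univ (hp : MemDelta k p) (hk : 0 ≤ k) : k < p.real univ :=
  (ENNReal.ofReal_lt_iff_lt_toReal hk (ne_top_of_le_ne_top ENNReal.one_ne_top hp.2.2)).1 hp.2.1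

end MemDelta

namespace IsCDFfam

variable {F : ℝ → ℝ → ℝ} {e : ℝ}

theorem mem_Icc (hF : IsCDFfam F) (he : 0 < e) (x : ℝ) : F e x ∈ Icc 0 1 :=
  have ⟨_, hmono, hbot, htop⟩ := hF.1 e he
  ⟨hmono.monotone.le_of_tendsto hbot x, hmono.monotone.ge_of_tendsto htop x⟩

theorem norm_one_sub_le (hF : IsCDFfam F) (he : 0 < e) (x : ℝ) : ‖1 - F e x‖ ≤ 1 := by
  obtain ⟨h0, h1⟩ := hF.mem_Icc he x
  rw [Real.norm_eq_abs, abs_le]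
  constructor <;> linarith

theorem continuous_one_sub (hF : IsCDFfam F) (he : 0 < e) : Continuous fun x => 1 - F e x :=
  continuous_const.sub (hF.1 e he).1

theorem strictAnti_one_sub (hF : IsCDFfam F) (he : 0 < e) : StrictAnti fun x => 1 - F e x :=
  fun _ _ hxy => sub_lt_sub_left ((hF.1 e he).2.1 hxy) 1

theorem tendsto_one_sub_atBot (hF : IsCDFfam F) (he : 0 < e) :
    Tendsto (fun x => 1 - F e x) atBot (𝓝 1) := by
  simpa using tendsto_const_nhds.sub (hF.1 e he).2.2.1

theorem tendsto_one_sub_atTop (hF : IsCDFfam F) (he : 0 < e) :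
    Tendsto (fun x => 1 - F e x) atTop (𝓝 0) := by
  simpa using (tendsto_const_nhds (x := (1 : ℝ))).sub (hF.1 e he).2.2.2

theorem aestronglyMeasurable_one_sub (hF : IsCDFfam F) {μ : Measure ℝ}
    (hμ : ∀ᵐ e ∂μ, 0 < e) (x : ℝ) : AEStronglyMeasurable (fun e => 1 - F e x) μ := by
  rw [← Measure.restrict_eq_self_of_ae_mem hμ]
  exact (continuousOn_const.sub (hF.2 x).1).aestronglyMeasurable measurableSet_Ioi

end IsCDFfam

/-- existence and uniqueness of the market-clearing cutoff `s(p)`. -/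
theorem cutoff_exists_unique (F : ℝ → ℝ → ℝ) (hF : IsCDFfam F)
    (k : ℝ) (hk : k ∈ Set.Ioo (0:ℝ) 1)
    (p : MeasureTheory.Measure ℝ) (hp : MemDelta k p) :
    ∃! s : ℝ, (∫ e, (1 - F e s) ∂p) = k := by
  have := hp.isFiniteMeasure
  have hmeas := hF.aestronglyMeasurable_one_sub hp.ae_pos
  have hbound : ∀ᵐ e ∂p, ∀ s, ‖1 - F e s‖ ≤ 1 :=
    hp.ae_pos.mono fun _ he => hF.norm_one_sub_le he
  have hbot := tendsto_integral_of_ae_norm_le hmeas hbound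
    (hp.ae_pos.mono fun _ he => hF.tendsto_one_sub_atBot he)
  have htop := tendsto_integral_of_ae_norm_le hmeas hbound
    (hp.ae_pos.mono fun _ he => hF.tendsto_one_sub_atTop he)
  rw [mul_one] at hbot
  rw [mul_zero] at htop
  exact existsUnique_eq_of_strictAnti_of_tendsto
    (continuous_integral_of_ae_norm_le hmeas hbound
      (hp.ae_pos.mono fun _ he => hF.continuous_one_sub he))
    (strictAnti_integral_of_ae_norm_le hp.ne_zero hmeas hbound
      (hp.ae_pos.mono fun _ he => hF.strictAnti_one_sub he))
    hbot htop ⟨hk.1, hp.lt_measureReal_univ hk.1.le⟩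
end
end

section
/- If W is a Random Performance Function, then W satisfies Co-monotonicity: for all efforts e, e' > 0 and all p, p' ∈ Δ_k, W(e,p) ≥ W(e,p') implies W(e',p) ≥ W(e',p'). -/
open MeasureTheory Set Filter Topology

noncomputable section

/-- every RPF satisfies Co-monotonicity. -/
theorem rpf_comonotone (k : ℝ) (hk : k ∈ Set.Ioo (0:ℝ) 1)
    (W : ℝ → MeasureTheory.Measure ℝ → ℝ) (hW : IsCSF k W) (hRPF : IsRPF k W) :
    CoMonotone k W := by
  obtain ⟨F, hF, hrep⟩ := hRPF
  intro e he e' he' p p' hp hp' hle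
  obtain ⟨s, _, hs⟩ := hrep p hp
  obtain ⟨s', _, hs'⟩ := hrep p' hp'
  rw [hs e he, hs' e he] at hle
  rw [hs e' he', hs' e' he']
  have hmono := (hF.1 e he).2.1
  have hss' : s ≤ s' := by
    by_contra h
    push_neg at h
    have := hmono h
    linarith
  have := (hF.1 e' he').2.1.monotone hss'
  linarith
end
end

section
/- If W is a Random Performance Function, then W satisfies Competitiveness: for each fixed e > 0, lim_{ē→∞} W(e, δ_{ē}) = 0, where δ_{ē} is the Dirac measure at ē. -/
open MeasureTheory Set Filter Topology

noncomputable section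

/-- every RPF satisfies Competitiveness. -/
theorem rpf_competitive (k : ℝ) (hk : k ∈ Set.Ioo (0:ℝ) 1)
    (W : ℝ → MeasureTheory.Measure ℝ → ℝ) (hW : IsCSF k W) (hRPF : IsRPF k W) :
    CSFCompetitive k W := by
  classical
  obtain ⟨F, hFam, hrep⟩ := hRPF
  intro e he
  have hk0 := hk.1
  have hk1 := hk.2
  have hmem : ∀ eb : ℝ, 0 < eb → MemDelta k (Measure.dirac eb) := by
    intro eb heb
    refine ⟨?_, ?_, ?_⟩
    · rw [Measure.dirac_apply' _ measurableSet_Iic]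
      simp [Set.indicator_of_notMem, not_le.mpr heb]
    · simpa using ENNReal.ofReal_lt_one.mpr hk1
    · simp
  set g : ℝ → ℝ := fun eb => if h : MemDelta k (Measure.dirac eb) then
      Classical.choose (hrep _ h) else 0 with hg
  have key : ∀ eb : ℝ, 0 < eb → F eb (g eb) = 1 - k ∧
      ∀ e' ∈ Set.Ioi (0:ℝ), W e' (Measure.dirac eb) = 1 - F e' (g eb) := by
    intro eb heb
    have h := hmem eb heb
    have hs := Classical.choose_spec (hrep _ h)
    rw [hg]
    simp only [dif_pos h]
    obtain ⟨hint, hW'⟩ := hs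
    rw [integral_dirac] at hint
    exact ⟨by linarith, hW'⟩
  have hgtop : Tendsto g atTop atTop := by
    rw [tendsto_atTop]
    intro M
    have h0 : Tendsto (fun e' => F e' M) atTop (nhds 0) := (hFam.2 M).2.2
    have hev : ∀ᶠ eb in atTop, F eb M < 1 - k :=
      h0.eventually_lt_const (by linarith)
    filter_upwards [hev, eventually_gt_atTop (0:ℝ)] with eb h1 h2
    by_contra hlt
    push_neg at hlt
    have hmono := (hFam.1 eb h2).2.1
    have hFlt : F eb (g eb) < F eb M := hmono hlt
    rw [(key eb h2).1] at hFlt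
    linarith
  have hF1 : Tendsto (fun eb => F e (g eb)) atTop (nhds 1) :=
    ((hFam.1 e he).2.2.2).comp hgtop
  have hlim : Tendsto (fun eb => 1 - F e (g eb)) atTop (nhds 0) := by
    have := hF1.const_sub 1
    simpa using this
  refine Tendsto.congr' ?_ hlim
  filter_upwards [eventually_gt_atTop (0:ℝ)] with eb heb
  exact ((key eb heb).2 e he).symm
end
end

section
/- If W is an Additive RPF, then W satisfies Invariance to Common Shifts: for every e, a > 0 and p ∈ Δ_k, W(e,p) = W(e+a, p ∔ a). -/
open MeasureTheory Set Filter Topology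

noncomputable section

/-
The cutoff of an additive RPF is pinned down by market clearing: for a fixed distribution `p`,
the mass `t ↦ ∫ (1 - F (t - x)) dp` of winners at cutoff `t` is strictly decreasing, so it takes
the value `k` at exactly one `t`. Shifting `p` by `a` and the cutoff by `a` leaves every `t - x`,
hence this mass, unchanged, so `s (p ∔ a) = s p + a`, and `W (e + a) (p ∔ a) = 1 - F (s p - e)`.
-/

lemma MemDelta.isFiniteMeasure_s11 {k : ℝ} {p : Measure ℝ} (hp : MemDelta k p) :
    IsFiniteMeasure p :=
  ⟨hp.2.2.trans_lt ENNReal.one_lt_top⟩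

lemma MemDelta.neZero {k : ℝ} {p : Measure ℝ} (hp : MemDelta k p) : NeZero p :=
  ⟨fun h => by simpa [h] using hp.2.1⟩

lemma integral_shift (p : Measure ℝ) (a : ℝ) (f : ℝ → ℝ) :
    ∫ x, f x ∂(shift p a) = ∫ x, f (x + a) ∂p :=
  (measurableEmbedding_addRight a).integral_map f

lemma MemDelta.shift {k a : ℝ} {p : Measure ℝ} (hp : MemDelta k p) (ha : 0 ≤ a) :
    MemDelta k (shift p a) := by
  obtain ⟨hIic, hlt, hle⟩ := hp
  have hm : Measurable (fun x : ℝ => x + a) := measurable_add_const a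
  refine ⟨?_, ?_, ?_⟩
  · rw [_root_.shift, Measure.map_apply hm measurableSet_Iic]
    exact measure_mono_null (fun x (hx : x + a ≤ 0) => show x ≤ 0 by linarith) hIic
  · rwa [_root_.shift, Measure.map_apply hm MeasurableSet.univ, preimage_univ]
  · rwa [_root_.shift, Measure.map_apply hm MeasurableSet.univ, preimage_univ]

lemma integral_lt_integral_of_forall_lt {α : Type*} [MeasurableSpace α] {μ : Measure α}
    [NeZero μ] {f g : α → ℝ} (hf : Integrable f μ) (hg : Integrable g μ) (hfg : ∀ x, f x < g x) :
    ∫ x, f x ∂μ < ∫ x, g x ∂μ := by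
  have hpos : 0 < ∫ x, (g x - f x) ∂μ := by
    rw [integral_pos_iff_support_of_nonneg (fun x => sub_nonneg.2 (hfg x).le) (hg.sub hf)]
    have : Function.support (fun x => g x - f x) = univ :=
      eq_univ_of_forall fun x => sub_ne_zero.2 (hfg x).ne'
    simpa [this] using NeZero.ne μ
  rwa [integral_sub hg hf, sub_pos] at hpos

namespace IsCDF

variable {F : ℝ → ℝ}

lemma nonneg (hF : IsCDF F) (x : ℝ) : 0 ≤ F x :=
  le_of_tendsto hF.2.2.1 (eventually_atBot.2 ⟨x, fun _ hy => hF.2.1.monotone hy⟩)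

lemma le_one (hF : IsCDF F) (x : ℝ) : F x ≤ 1 :=
  ge_of_tendsto hF.2.2.2 (eventually_atTop.2 ⟨x, fun _ hy => hF.2.1.monotone hy⟩)

lemma integrable_one_sub_comp_sub (hF : IsCDF F) (μ : Measure ℝ) [IsFiniteMeasure μ] (t : ℝ) :
    Integrable (fun x => 1 - F (t - x)) μ := by
  refine Integrable.of_bound
    (continuous_const.sub (hF.1.comp (continuous_const.sub continuous_id))).aestronglyMeasurable
    1 (Eventually.of_forall fun x => ?_)
  rw [Real.norm_eq_abs, abs_le]
  constructor <;> linarith [hF.nonneg (t - x), hF.le_one (t - x)]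

lemma strictAnti_integral_one_sub_comp_sub (hF : IsCDF F) (μ : Measure ℝ) [IsFiniteMeasure μ]
    [NeZero μ] :
    StrictAnti fun t => ∫ x, 1 - F (t - x) ∂μ := fun _ _ hlt =>
  integral_lt_integral_of_forall_lt (hF.integrable_one_sub_comp_sub μ _)
    (hF.integrable_one_sub_comp_sub μ _)
    fun x => sub_lt_sub_left (hF.2.1 (sub_lt_sub_right hlt x)) 1

lemma cutoff_shift (hF : IsCDF F) {p : Measure ℝ} [IsFiniteMeasure p] [NeZero p] {k s s' a : ℝ}
    (hs : ∫ x, 1 - F (s - x) ∂p = k) (hs' : ∫ x, 1 - F (s' - x) ∂(shift p a) = k) :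
    s' = s + a := by
  have hclear : ∫ x, 1 - F (s' - a - x) ∂p = ∫ x, 1 - F (s - x) ∂p := by
    rw [hs, ← hs', integral_shift]
    simp_rw [sub_sub, add_comm a]
  have := (hF.strictAnti_integral_one_sub_comp_sub p).injective hclear
  linarith

end IsCDF

theorem arpf_inv_common_shifts_general (k : ℝ)
    (W : ℝ → MeasureTheory.Measure ℝ → ℝ) (hA : IsARPF k W) :
    InvCommonShifts k W := by
  obtain ⟨F, hF, hrep⟩ := hA
  intro e he a ha p hp
  have := hp.isFiniteMeasure_s11
  have := hp.neZero
  obtain ⟨s, hs, hWs⟩ := hrep p hp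
  obtain ⟨s', hs', hWs'⟩ := hrep (shift p a) (hp.shift (le_of_lt ha))
  rw [hWs e he, hWs' (e + a) (mem_Ioi.2 (add_pos he ha)), hF.cutoff_shift hs hs',
    add_sub_add_right_eq_sub]

/-- every Additive RPF satisfies Invariance to Common Shifts. -/
theorem arpf_inv_common_shifts (k : ℝ) (hk : k ∈ Set.Ioo (0:ℝ) 1)
    (W : ℝ → MeasureTheory.Measure ℝ → ℝ) (hW : IsCSF k W) (hA : IsARPF k W) :
    InvCommonShifts k W :=
  arpf_inv_common_shifts_general k W hA
end
end

section
/- Suppose W is an Additive RPF represented by the CDF F₁. Then a CDF F₂ also represents W if and only if there exists t ∈ ℝ such that F₂(x) = F₁(x + t) for all x ∈ ℝ. -/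
open MeasureTheory Set Filter Topology

noncomputable section

/-- for an Additive RPF represented by `F₁`, a CDF `F₂` also
represents `W` iff `F₂` is a translate of `F₁` (Proposition 1). -/
theorem arpf_uniqueness (k : ℝ) (hk : k ∈ Set.Ioo (0:ℝ) 1)
    (W : ℝ → MeasureTheory.Measure ℝ → ℝ) (hW : IsCSF k W)
    (F₁ : ℝ → ℝ) (hF₁ : IsCDF F₁) (hrep₁ : RepresentsA k W F₁)
    (F₂ : ℝ → ℝ) (hF₂ : IsCDF F₂) :
    RepresentsA k W F₂ ↔ ∃ t : ℝ, ∀ x : ℝ, F₂ x = F₁ (x + t) := by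
  obtain ⟨hF₁c, hF₁m, hF₁b, hF₁t⟩ := hF₁
  obtain ⟨hF₂c, hF₂m, hF₂b, hF₂t⟩ := hF₂
  constructor
  · intro hrep₂
    have hk1 : (0:ℝ) < 1 - k := by linarith [hk.2]
    have hk2 : 1 - k < 1 := by linarith [hk.1]
    have hc : ∀ F : ℝ → ℝ, Continuous F → Filter.Tendsto F Filter.atBot (nhds 0) →
        Filter.Tendsto F Filter.atTop (nhds 1) → ∃ c, F c = 1 - k := by
      intro F hcont hb ht
      obtain ⟨a, ha⟩ := (hb.eventually (eventually_lt_nhds hk1)).exists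
      obtain ⟨b, hb'⟩ := (ht.eventually (eventually_gt_nhds hk2)).exists
      obtain ⟨c, hc'⟩ := intermediate_value_univ a b hcont ⟨ha.le, hb'.le⟩
      exact ⟨c, hc'⟩
    obtain ⟨c₁, hc₁⟩ := hc F₁ hF₁c hF₁b hF₁t
    obtain ⟨c₂, hc₂⟩ := hc F₂ hF₂c hF₂b hF₂t
    have hmem : ∀ a : ℝ, 0 < a → MemDelta k (MeasureTheory.Measure.dirac a) := by
      intro a ha
      refine ⟨?_, ?_, ?_⟩
      · rw [MeasureTheory.Measure.dirac_apply' _ measurableSet_Iic]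
        simp [Set.indicator_of_notMem, not_le.mpr ha]
      · simpa using ENNReal.ofReal_lt_one.mpr hk.2
      · simp
    have key : ∀ eb > (0:ℝ), ∀ e > (0:ℝ), F₁ (c₁ + eb - e) = F₂ (c₂ + eb - e) := by
      intro eb heb e he
      obtain ⟨s₁, hs₁int, hs₁⟩ := hrep₁ _ (hmem eb heb)
      obtain ⟨s₂, hs₂int, hs₂⟩ := hrep₂ _ (hmem eb heb)
      rw [MeasureTheory.integral_dirac] at hs₁int hs₂int
      have e1 : s₁ = c₁ + eb := by
        have h : F₁ (s₁ - eb) = F₁ c₁ := by rw [hc₁]; linarith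
        have := hF₁m.injective h; linarith
      have e2 : s₂ = c₂ + eb := by
        have h : F₂ (s₂ - eb) = F₂ c₂ := by rw [hc₂]; linarith
        have := hF₂m.injective h; linarith
      have hW' := (hs₁ e he).symm.trans (hs₂ e he)
      rw [e1, e2] at hW'
      linarith
    refine ⟨c₁ - c₂, fun x => ?_⟩
    set eb : ℝ := max (x - c₂) 0 + 1 with heb_def
    have heb : 0 < eb := by
      have := le_max_right (x - c₂) 0; simp only [heb_def]; linarith
    have he : 0 < eb - (x - c₂) := by
      have := le_max_left (x - c₂) 0; simp only [heb_def]; linarith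
    have h := key eb heb (eb - (x - c₂)) he
    rw [show c₁ + eb - (eb - (x - c₂)) = x + (c₁ - c₂) by ring,
        show c₂ + eb - (eb - (x - c₂)) = x by ring] at h
    exact h.symm
  · rintro ⟨t, ht⟩ p hp
    obtain ⟨s, hsint, hs⟩ := hrep₁ p hp
    have hfun : ∀ e : ℝ, (1 : ℝ) - F₂ (s - t - e) = 1 - F₁ (s - e) := by
      intro e; rw [ht, show s - t - e + t = s - e by ring]
    refine ⟨s - t, ?_, fun e he => ?_⟩
    · simp only [hfun]; exact hsint
    · rw [hfun e]; exact hs e he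
end
end

section
/- Suppose the density f of F is symmetric around zero and satisfies s·f'(s) ≤ 0 for all s. Let e*(k) solve c'(e*(k)) = f(F^{-1}(1-k))·u(B/k), where u is strictly increasing and c' is strictly increasing. Then e*(k) is decreasing on k ∈ [1/2, 1). -/
open MeasureTheory Set Filter Topology

noncomputable section

/-- Proposition 3: if the density `f` is symmetric around zero
and `s f'(s) ≤ 0`, then the equilibrium effort `e*(k)` defined by
`c'(e*(k)) = f(F⁻¹(1-k)) u(B/k)` is decreasing on `k ∈ [1/2, 1)`. -/
theorem optimal_k_at_most_half (F f f' Finv : ℝ → ℝ) (hF : IsCDF F)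
    (hFd : ∀ x : ℝ, HasDerivAt F (f x) x)
    (hfd : ∀ x : ℝ, HasDerivAt f (f' x) x)
    (hsym : ∀ sx : ℝ, f (-sx) = f sx) (hsf : ∀ sx : ℝ, sx * f' sx ≤ 0)
    (hFinv : ∀ y ∈ Set.Ioo (0:ℝ) 1, F (Finv y) = y)
    (B : ℝ) (hB : 0 < B)
    (u c' : ℝ → ℝ) (hu : StrictMono u) (hupos : ∀ v : ℝ, 0 < v → 0 < u v)
    (hc' : StrictMono c')
    (estar : ℝ → ℝ)
    (he : ∀ k ∈ Set.Ioo (0:ℝ) 1, c' (estar k) = f (Finv (1 - k)) * u (B / k)) :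
    AntitoneOn estar (Set.Ico (1/2 : ℝ) 1) := by
  -- F(0) = 1/2 from symmetry
  have hF0 : F 0 = 1/2 := by
    have hconst : ∀ x : ℝ, F x + F (-x) = F 0 + F (-0) := by
      have hdiff : ∀ x : ℝ, HasDerivAt (fun y => F y + F (-y)) 0 x := by
        intro x
        have h1 : HasDerivAt (fun y : ℝ => F (-y)) (f (-x) * (-1)) x :=
          (hFd (-x)).comp x ((hasDerivAt_id x).neg)
        have h2 := (hFd x).add h1
        have : f x + f (-x) * (-1) = 0 := by rw [hsym x]; ring
        rwa [this] at h2
      intro x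
      exact is_const_of_deriv_eq_zero
        (fun y => (hdiff y).differentiableAt)
        (fun y => (hdiff y).deriv) x 0
    have hlim : Filter.Tendsto (fun x => F x + F (-x)) Filter.atTop (nhds 1) := by
      have := hF.2.2.2.add (hF.2.2.1.comp tendsto_neg_atTop_atBot)
      simpa using this
    have hlim2 : Filter.Tendsto (fun x : ℝ => F 0 + F (-0)) Filter.atTop
        (nhds (F 0 + F (-0))) := tendsto_const_nhds
    have heq : (fun x => F x + F (-x)) = fun _ : ℝ => F 0 + F (-0) := by
      funext x; exact hconst x
    rw [heq] at hlim
    have : F 0 + F (-0) = 1 := tendsto_nhds_unique hlim hlim2 ▸ rfl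
    have := tendsto_nhds_unique hlim hlim2
    simp only [neg_zero] at this
    linarith
  -- f is nonnegative
  have hfnonneg : ∀ x : ℝ, 0 ≤ f x := by
    intro x
    have h := hasDerivAt_iff_tendsto_slope.mp (hFd x)
    have h' : Filter.Tendsto (slope F x) (nhdsWithin x (Set.Ioi x)) (nhds (f x)) :=
      h.mono_left (nhdsWithin_mono x (fun y hy => ne_of_gt hy))
    refine ge_of_tendsto h' ?_
    filter_upwards [self_mem_nhdsWithin] with y hy
    have hy' : x < y := hy
    rw [slope_def_field]
    exact div_nonneg (by linarith [hF.2.1.monotone hy'.le]) (by linarith)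
  -- f is monotone on Iic 0
  have hfmono : MonotoneOn f (Set.Iic (0:ℝ)) := by
    apply monotoneOn_of_deriv_nonneg (convex_Iic 0)
    · exact (Differentiable.continuous fun x => (hfd x).differentiableAt).continuousOn
    · intro x hx
      exact (hfd x).differentiableAt.differentiableWithinAt
    · intro x hx
      rw [(hfd x).deriv]
      rw [interior_Iic] at hx
      have : x < 0 := hx
      nlinarith [hsf x]
  intro k₁ hk₁ k₂ hk₂ hle
  obtain ⟨hk₁half, hk₁lt⟩ := hk₁
  obtain ⟨hk₂half, hk₂lt⟩ := hk₂
  have hk₁pos : (0:ℝ) < k₁ := by linarith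
  have hk₂pos : (0:ℝ) < k₂ := by linarith
  have hmem₁ : k₁ ∈ Set.Ioo (0:ℝ) 1 := ⟨hk₁pos, hk₁lt⟩
  have hmem₂ : k₂ ∈ Set.Ioo (0:ℝ) 1 := ⟨hk₂pos, hk₂lt⟩
  rw [← hc'.le_iff_le, he k₂ hmem₂, he k₁ hmem₁]
  have hm₁ : (1 - k₁) ∈ Set.Ioo (0:ℝ) 1 := by constructor <;> linarith
  have hm₂ : (1 - k₂) ∈ Set.Ioo (0:ℝ) 1 := by constructor <;> linarith
  have hFx₁ := hFinv _ hm₁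
  have hFx₂ := hFinv _ hm₂
  have hx₂₁ : Finv (1 - k₂) ≤ Finv (1 - k₁) := by
    rw [← hF.2.1.le_iff_le, hFx₁, hFx₂]; linarith
  have hx₁0 : Finv (1 - k₁) ≤ 0 := by
    rw [← hF.2.1.le_iff_le, hFx₁, hF0]; linarith
  have hf₂₁ : f (Finv (1 - k₂)) ≤ f (Finv (1 - k₁)) :=
    hfmono (Set.mem_Iic.mpr (hx₂₁.trans hx₁0)) (Set.mem_Iic.mpr hx₁0) hx₂₁
  have hu₂₁ : u (B / k₂) ≤ u (B / k₁) := by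
    apply hu.le_iff_le.mpr
    exact div_le_div_of_nonneg_left hB.le hk₁pos hle
  have hupos₂ : 0 < u (B / k₂) := hupos _ (div_pos hB hk₂pos)
  exact mul_le_mul hf₂₁ hu₂₁ hupos₂.le (hfnonneg _)
end
end

section
/- In the risk-neutral quadratic-cost contest, with equilibrium effort e* = (V/(2A))·f(F^{-1}(1-k)), the ratio of total effort cost to total rents equals (V/(4Ak))·(f(F^{-1}(1-k)))², which is strictly increasing in V; hence there is a threshold V₀ such that rents are under-dissipated (ratio < 1) for V < V₀ and over-dissipated (ratio > 1) for V > V₀. -/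
open MeasureTheory Set Filter Topology

noncomputable section

/-- rent dissipation with quadratic costs `c(e) = A e²` and
risk-neutral agents: the ratio of total effort cost `A (e*)²` to total rents
`k V` equals `(V/(4Ak))·f(F⁻¹(1-k))²`, is strictly increasing in `V`, and there
is a threshold `V₀ > 0` with under-dissipation below it and over-dissipation
above it. -/
theorem rent_dissipation (F f Finv : ℝ → ℝ) (hF : IsCDF F)
    (hFd : ∀ x : ℝ, HasDerivAt F (f x) x) (hfpos : ∀ x : ℝ, 0 < f x)
    (hFinv : ∀ y ∈ Set.Ioo (0:ℝ) 1, F (Finv y) = y)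
    (A : ℝ) (hA : 0 < A) (k : ℝ) (hk : k ∈ Set.Ioo (0:ℝ) 1) :
    (∀ V : ℝ, 0 < V →
      A * ((V / (2 * A)) * f (Finv (1 - k)))^2 / (k * V) =
        (V / (4 * A * k)) * (f (Finv (1 - k)))^2) ∧
    StrictMonoOn (fun V => (V / (4 * A * k)) * (f (Finv (1 - k)))^2)
      (Set.Ioi 0) ∧
    ∃ V₀ : ℝ, 0 < V₀ ∧ ∀ V : ℝ, 0 < V →
      ((V < V₀ → (V / (4 * A * k)) * (f (Finv (1 - k)))^2 < 1) ∧
       (V₀ < V → 1 < (V / (4 * A * k)) * (f (Finv (1 - k)))^2)) := by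
  have hk0 := hk.1
  have hc : 0 < (f (Finv (1 - k)))^2 := pow_pos (hfpos _) 2
  have h4 : (0:ℝ) < 4 * A * k := by positivity
  refine ⟨fun V hV => by field_simp; ring, ?_, ?_⟩
  · intro a _ b _ hab
    simp only
    have := div_lt_div_of_pos_right hab h4
    nlinarith
  · refine ⟨(4 * A * k) / (f (Finv (1 - k)))^2, by positivity, fun V hV => ⟨fun h => ?_, fun h => ?_⟩⟩
    · rw [div_mul_eq_mul_div, div_lt_one h4]
      rw [lt_div_iff₀ hc] at h
      nlinarith
    · rw [div_mul_eq_mul_div, lt_div_iff₀ h4] at *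
      rw [div_lt_iff₀ hc] at h
      nlinarith
end
end
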